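/- Let 0 < α ≤ 1, let s be a positive integer with √s > α, and let k ≥ 4α²/(√s − α)² be such that ks is a positive integer. Let b = Ax + z with ‖z‖₁ ≤ η₁. Suppose A ∈ ℝ^{m×n} has (ℓ₂,ℓ₁)-RIP constants satisfying δ_{ks}^{ub} + (√k/2)·δ_{(k+1)s}^{lb} < √k/2 − 1, and let x̂ satisfy ‖b − A x̂‖₁ ≤ η₁ and ‖x̂‖₁ − α‖x̂‖₂ ≤ ‖x‖₁ − α‖x‖₂. Then ‖x̂ − x‖₂ ≤ [2(2√k + 1)√s / ((2√(ks) − α)·ρ̃_{ks})]·η₁ + [√s/(2√(ks) − α)]·[(2√k + 1)(1 + δ_{ks}^{ub})√s/(ρ̃_{ks}(√(ks) − α)) + 1]·(2‖x_{-max(s)}‖₁/√s), where ρ̃_{ks} = 1 − δ_{(k+1)s}^{lb} − (1 + δ_{ks}^{ub})/(√k/2). -/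

import Mathlib

open Finset

/-- The ℓ₁ norm of a vector in `ℝⁿ`. -/
noncomputable def l1norm {n : ℕ} (x : Fin n → ℝ) : ℝ := ∑ i, |x i|

/-- The ℓ₂ norm of a vector in `ℝⁿ`. -/
noncomputable def l2norm {n : ℕ} (x : Fin n → ℝ) : ℝ := Real.sqrt (∑ i, (x i) ^ 2)

/-- The restriction `x_S` of a vector `x` to an index set `S` (equal to `x` on `S`, zero
outside `S`). -/
def restr {n : ℕ} (x : Fin n → ℝ) (S : Finset (Fin n)) : Fin n → ℝ :=
  fun i => if i ∈ S then x i else 0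

/-- `T` is an index set of the `s` largest-magnitude entries of `x` among the indices in `S`. -/
def IsMaxIdxOn {n : ℕ} (x : Fin n → ℝ) (s : ℕ) (T S : Finset (Fin n)) : Prop :=
  T ⊆ S ∧ T.card = s ∧ ∀ i ∈ T, ∀ j ∈ S \ T, |x j| ≤ |x i|

/-- `T` is an index set of the `s` largest-magnitude entries of `x`. -/
def IsMaxIdx {n : ℕ} (x : Fin n → ℝ) (s : ℕ) (T : Finset (Fin n)) : Prop :=
  IsMaxIdxOn x s T Finset.univ

/-- A vector is `r`-sparse: it has at most `r` nonzero entries. -/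
def Sparse {n : ℕ} (r : ℕ) (v : Fin n → ℝ) : Prop :=
  ∃ S : Finset (Fin n), S.card ≤ r ∧ ∀ i ∉ S, v i = 0

/-! The error `h = x̂ - x` satisfies `‖Ah‖₁ ≤ 2η₁` and, by the minimality of `x̂`, the cone
constraint `‖h_{Tᶜ}‖₁ ≤ ‖h_T‖₁ + 2‖x_{Tᶜ}‖₁ + α‖h‖₂`. Let `B` be `T` together with the `ks`
largest entries of `h` off `T`. Shelling the remaining entries into blocks of `ks` entries bounds
`‖A h_{Bᶜ}‖₁` by `(1 + δ^{ub}) ‖h_{Tᶜ}‖₁ / √(ks)`, and comparing each entry off `B` with the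
smallest one in `B \ T` gives `‖h‖₂ ≤ ‖h_B‖₂ + ‖h_{Tᶜ}‖₁ / (2√(ks))`. The lower RIP bound for the
`(k+1)s`-sparse vector `h_B` then closes a system of linear inequalities in `‖h_B‖₂` and `‖h‖₂`;
the conditions on `k` and on the RIP constants make it solvable. -/

section Norms

variable {n : ℕ}

lemma l1norm_nonneg (x : Fin n → ℝ) : 0 ≤ l1norm x :=
  Finset.sum_nonneg fun _ _ => abs_nonneg _

lemma l2norm_nonneg (x : Fin n → ℝ) : 0 ≤ l2norm x := Real.sqrt_nonneg _

lemma l1norm_add_le (x y : Fin n → ℝ) : l1norm (x + y) ≤ l1norm x + l1norm y := by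
  unfold l1norm
  rw [← Finset.sum_add_distrib]
  exact Finset.sum_le_sum fun i _ => abs_add_le (x i) (y i)

lemma l1norm_sub_le (x y : Fin n → ℝ) : l1norm (x - y) ≤ l1norm x + l1norm y := by
  unfold l1norm
  rw [← Finset.sum_add_distrib]
  exact Finset.sum_le_sum fun i _ => abs_sub (x i) (y i)

lemma l2norm_eq_norm (v : Fin n → ℝ) : l2norm v = ‖WithLp.toLp 2 v‖ := by
  simp [l2norm, EuclideanSpace.norm_eq, Real.norm_eq_abs, sq_abs]

lemma l2norm_add_le (x y : Fin n → ℝ) : l2norm (x + y) ≤ l2norm x + l2norm y := by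
  simpa only [l2norm_eq_norm, WithLp.toLp_add] using norm_add_le _ _

lemma l1norm_restr (u : Fin n → ℝ) (S : Finset (Fin n)) :
    l1norm (restr u S) = ∑ i ∈ S, |u i| := by
  simp [l1norm, restr, apply_ite, Finset.sum_ite_mem]

lemma l2norm_sq_restr (u : Fin n → ℝ) (S : Finset (Fin n)) :
    l2norm (restr u S) ^ 2 = ∑ i ∈ S, u i ^ 2 := by
  rw [l2norm, Real.sq_sqrt (Finset.sum_nonneg fun _ _ => sq_nonneg _)]
  simp [restr, Finset.sum_ite_mem]

lemma l2norm_restr (u : Fin n → ℝ) (S : Finset (Fin n)) :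
    l2norm (restr u S) = Real.sqrt (∑ i ∈ S, u i ^ 2) := by
  rw [← l2norm_sq_restr, Real.sqrt_sq (l2norm_nonneg _)]

lemma restr_univ (u : Fin n → ℝ) : restr u Finset.univ = u := by
  funext i; simp [restr]

lemma restr_empty (u : Fin n → ℝ) : restr u ∅ = 0 := by
  funext i; simp [restr]

lemma restr_sub (u v : Fin n → ℝ) (S : Finset (Fin n)) :
    restr (u - v) S = restr u S - restr v S := by
  funext i; by_cases hi : i ∈ S <;> simp [restr, hi]

lemma restr_add_restr_sdiff (u : Fin n → ℝ) {S₁ S : Finset (Fin n)} (h : S₁ ⊆ S) :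
    restr u S₁ + restr u (S \ S₁) = restr u S := by
  funext i
  by_cases h₁ : i ∈ S₁
  · simp [restr, h₁, h h₁]
  · by_cases h₂ : i ∈ S <;> simp [restr, h₁, h₂]

lemma restr_add_restr_compl (u : Fin n → ℝ) (S : Finset (Fin n)) :
    restr u S + restr u Sᶜ = u := by
  rw [Finset.compl_eq_univ_sdiff, restr_add_restr_sdiff u (Finset.subset_univ S), restr_univ]

lemma l1norm_restr_add_sdiff (u : Fin n → ℝ) {S₁ S : Finset (Fin n)} (h : S₁ ⊆ S) :
    l1norm (restr u S₁) + l1norm (restr u (S \ S₁)) = l1norm (restr u S) := by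
  rw [l1norm_restr, l1norm_restr, l1norm_restr, add_comm, Finset.sum_sdiff h]

lemma l1norm_restr_add_compl (u : Fin n → ℝ) (S : Finset (Fin n)) :
    l1norm (restr u S) + l1norm (restr u Sᶜ) = l1norm u := by
  rw [Finset.compl_eq_univ_sdiff, l1norm_restr_add_sdiff u (Finset.subset_univ S), restr_univ]

lemma l2norm_sq_restr_add_compl (u : Fin n → ℝ) (S : Finset (Fin n)) :
    l2norm (restr u S) ^ 2 + l2norm (restr u Sᶜ) ^ 2 = l2norm u ^ 2 := by
  rw [l2norm_sq_restr, l2norm_sq_restr, Finset.sum_add_sum_compl, ← l2norm_sq_restr, restr_univ]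

lemma l2norm_restr_mono (u : Fin n → ℝ) {S B : Finset (Fin n)} (h : S ⊆ B) :
    l2norm (restr u S) ≤ l2norm (restr u B) := by
  rw [l2norm_restr, l2norm_restr]
  exact Real.sqrt_le_sqrt (Finset.sum_le_sum_of_subset_of_nonneg h fun _ _ _ => sq_nonneg _)

lemma l1norm_restr_le_sqrt_card_mul (u : Fin n → ℝ) (S : Finset (Fin n)) :
    l1norm (restr u S) ≤ Real.sqrt S.card * l2norm (restr u S) := by
  have hcs := sq_sum_le_card_mul_sum_sq (s := S) (f := fun i => |u i|)
  simp only [sq_abs] at hcs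
  rw [l1norm_restr, l2norm_restr, ← Real.sqrt_mul (Nat.cast_nonneg _),
    ← Real.sqrt_sq (Finset.sum_nonneg fun i _ => abs_nonneg (u i))]
  exact Real.sqrt_le_sqrt hcs

lemma l2norm_restr_le_sqrt_card_mul (u : Fin n → ℝ) (S : Finset (Fin n)) {lam : ℝ}
    (hlam0 : 0 ≤ lam) (hlam : ∀ i ∈ S, |u i| ≤ lam) :
    l2norm (restr u S) ≤ Real.sqrt S.card * lam := by
  have hsum : ∑ i ∈ S, u i ^ 2 ≤ S.card * lam ^ 2 := by
    simpa using Finset.sum_le_card_nsmul S (fun i => u i ^ 2) (lam ^ 2) fun i hi =>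
      sq_le_sq' (neg_le_of_abs_le (hlam i hi)) (le_of_abs_le (hlam i hi))
  rw [l2norm_restr, ← Real.sqrt_sq hlam0, ← Real.sqrt_mul (Nat.cast_nonneg _)]
  exact Real.sqrt_le_sqrt hsum

lemma l2norm_sq_restr_le (u : Fin n → ℝ) (S : Finset (Fin n)) {lam : ℝ}
    (hlam : ∀ i ∈ S, |u i| ≤ lam) :
    l2norm (restr u S) ^ 2 ≤ lam * l1norm (restr u S) := by
  rw [l2norm_sq_restr, l1norm_restr, Finset.mul_sum]
  refine Finset.sum_le_sum fun i hi => ?_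
  rw [← sq_abs, sq]
  exact mul_le_mul_of_nonneg_right (hlam i hi) (abs_nonneg _)

lemma sparse_restr (u : Fin n → ℝ) {S : Finset (Fin n)} {r : ℕ} (h : S.card ≤ r) :
    Sparse r (restr u S) :=
  ⟨S, h, fun i hi => by simp [restr, hi]⟩

end Norms

section Shelling

variable {n m : ℕ}

lemma exists_isMaxIdxOn (x : Fin n → ℝ) (S : Finset (Fin n)) {r : ℕ} (hr : r ≤ S.card) :
    ∃ T, IsMaxIdxOn x r T S := by
  induction r with
  | zero => exact ⟨∅, Finset.empty_subset _, Finset.card_empty, by simp⟩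
  | succ r ih =>
    obtain ⟨T, hTS, hTcard, hTmax⟩ := ih (Nat.le_of_succ_le hr)
    have hne : (S \ T).Nonempty := by
      rw [← Finset.card_pos, Finset.card_sdiff_of_subset hTS, hTcard]
      omega
    obtain ⟨j, hj, hjmax⟩ := Finset.exists_max_image (S \ T) (fun i => |x i|) hne
    have hjT : j ∉ T := (Finset.mem_sdiff.1 hj).2
    refine ⟨insert j T, Finset.insert_subset (Finset.mem_sdiff.1 hj).1 hTS, ?_, ?_⟩
    · rw [Finset.card_insert_of_notMem hjT, hTcard]
    · intro i hi l hl
      have hlT : l ∈ S \ T := by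
        rw [Finset.mem_sdiff] at hl ⊢
        exact ⟨hl.1, fun h => hl.2 (Finset.mem_insert_of_mem h)⟩
      rcases Finset.mem_insert.1 hi with rfl | hi
      · exact hjmax l hlT
      · exact hTmax i hi l hlT

lemma exists_level_of_isMaxIdxOn (u : Fin n → ℝ) {r : ℕ} (hr : 0 < r) {T S : Finset (Fin n)}
    (hT : IsMaxIdxOn u (min r S.card) T S) :
    ∃ lam, 0 ≤ lam ∧ (∀ j ∈ S \ T, |u j| ≤ lam) ∧
      Real.sqrt r * lam ≤ l1norm (restr u T) / Real.sqrt r := by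
  -- `lam` is the smallest magnitude in `T`, or `0` when `S` has fewer than `r` indices and `T = S`.
  obtain ⟨hTS, hTcard, hTmax⟩ := hT
  suffices ∃ lam, 0 ≤ lam ∧ (∀ j ∈ S \ T, |u j| ≤ lam) ∧ r * lam ≤ l1norm (restr u T) by
    obtain ⟨lam, hlam0, hlam, hrlam⟩ := this
    refine ⟨lam, hlam0, hlam, ?_⟩
    rwa [le_div_iff₀ (Real.sqrt_pos.2 (Nat.cast_pos.2 hr)), mul_right_comm,
      Real.mul_self_sqrt (Nat.cast_nonneg _)]
  rcases le_or_gt r S.card with hrS | hSr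
  · rw [min_eq_left hrS] at hTcard
    obtain ⟨i₀, hi₀, hi₀min⟩ :=
      Finset.exists_min_image T (fun i => |u i|) (Finset.card_pos.1 (hTcard ▸ hr))
    refine ⟨|u i₀|, abs_nonneg _, hTmax i₀ hi₀, ?_⟩
    rw [l1norm_restr]
    simpa [hTcard] using Finset.card_nsmul_le_sum T (fun i => |u i|) _ hi₀min
  · have hTeq : T = S := Finset.eq_of_subset_of_card_le hTS (by rw [hTcard]; omega)
    refine ⟨0, le_rfl, by simp [hTeq], ?_⟩
    rw [mul_zero]
    exact l1norm_nonneg _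

/-- The upper `(ℓ₂, ℓ₁)`-RIP bound on `r`-sparse vectors; `C` is `1 + δ_r^{ub}`. -/
def UpperRIP (A : Matrix (Fin m) (Fin n) ℝ) (r : ℕ) (C : ℝ) : Prop :=
  ∀ v : Fin n → ℝ, Sparse r v → l1norm (A.mulVec v) ≤ C * l2norm v

/-- Shelling: split `S` into blocks of `r` entries of decreasing magnitude; the `ℓ₂` norm of each
block is at most `√r` times the smallest entry of the previous one, hence at most its `ℓ₁` norm
divided by `√r`. -/
lemma l1norm_mulVec_restr_le {A : Matrix (Fin m) (Fin n) ℝ} {r : ℕ} {C : ℝ}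
    (hA : UpperRIP A r C) (hr : 0 < r) (hC : 0 ≤ C) (u : Fin n → ℝ) (S : Finset (Fin n))
    {lam : ℝ} (hlam0 : 0 ≤ lam) (hlam : ∀ i ∈ S, |u i| ≤ lam) :
    l1norm (A.mulVec (restr u S)) ≤
      C * (l1norm (restr u S) / Real.sqrt r + Real.sqrt r * lam) := by
  induction S using Finset.strongInduction generalizing lam with
  | H S ih =>
  rcases S.eq_empty_or_nonempty with rfl | hS
  · rw [restr_empty, Matrix.mulVec_zero]
    simp only [l1norm, Pi.zero_apply, abs_zero, Finset.sum_const_zero]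
    positivity
  obtain ⟨S₁, hS₁⟩ := exists_isMaxIdxOn u S (min_le_right r S.card)
  obtain ⟨lam', hlam'0, hlam', hlevel⟩ := exists_level_of_isMaxIdxOn u hr hS₁
  obtain ⟨hS₁S, hS₁card, -⟩ := hS₁
  have hS₁r : S₁.card ≤ r := hS₁card ▸ min_le_left _ _
  have hS₁ne : S₁.Nonempty := Finset.card_pos.1 (by rw [hS₁card]; exact lt_min hr hS.card_pos)
  have hhead : l1norm (A.mulVec (restr u S₁)) ≤ C * (Real.sqrt r * lam) := by
    refine (hA _ (sparse_restr u hS₁r)).trans (mul_le_mul_of_nonneg_left ?_ hC)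
    calc l2norm (restr u S₁) ≤ Real.sqrt S₁.card * lam :=
          l2norm_restr_le_sqrt_card_mul u S₁ hlam0 fun i hi => hlam i (hS₁S hi)
      _ ≤ Real.sqrt r * lam := by gcongr
  have htail := ih (S \ S₁) (Finset.sdiff_ssubset hS₁S hS₁ne) hlam'0 hlam'
  have hsplit : l1norm (A.mulVec (restr u S)) ≤
      l1norm (A.mulVec (restr u S₁)) + l1norm (A.mulVec (restr u (S \ S₁))) := by
    rw [← restr_add_restr_sdiff u hS₁S, Matrix.mulVec_add]
    exact l1norm_add_le _ _
  rw [← l1norm_restr_add_sdiff u hS₁S, add_div]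
  linarith [mul_le_mul_of_nonneg_left hlevel hC]

end Shelling

section Head

variable {n m : ℕ}

lemma l2norm_le_add_of_abs_le (u : Fin n → ℝ) (B : Finset (Fin n)) {t lam : ℝ} (ht : 0 < t)
    (hlam : ∀ j ∈ Bᶜ, |u j| ≤ lam) (hlamB : t * lam ≤ l2norm (restr u B)) :
    l2norm u ≤ l2norm (restr u B) + l1norm (restr u Bᶜ) / (2 * t) := by
  set c := l1norm (restr u Bᶜ) / (2 * t)
  have hc : 0 ≤ c := div_nonneg (l1norm_nonneg _) (by positivity)
  have hlamc : lam * l1norm (restr u Bᶜ) = 2 * (t * lam) * c := by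
    simp only [c]; field_simp
  have htail := l2norm_sq_restr_le u Bᶜ hlam
  have hsq := l2norm_sq_restr_add_compl u B
  refine abs_le_of_sq_le_sq' ?_ (add_nonneg (l2norm_nonneg _) hc) |>.2
  linarith [mul_le_mul_of_nonneg_right hlamB hc, sq_nonneg c]

/-- `B` consists of `T` and the `r` largest entries of `u` off `T`. -/
lemma exists_superset_tail_bounds {A : Matrix (Fin m) (Fin n) ℝ} {r : ℕ} {C : ℝ}
    (hA : UpperRIP A r C) (hr : 0 < r) (hC : 0 ≤ C) (u : Fin n → ℝ) (T : Finset (Fin n)) :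
    ∃ B, T ⊆ B ∧ B.card ≤ T.card + r ∧
      l1norm (A.mulVec (restr u Bᶜ)) ≤ C * (l1norm (restr u Tᶜ) / Real.sqrt r) ∧
      l2norm u ≤ l2norm (restr u B) + l1norm (restr u Tᶜ) / (2 * Real.sqrt r) := by
  have hsqrt : 0 < Real.sqrt r := Real.sqrt_pos.2 (Nat.cast_pos.2 hr)
  obtain ⟨T₁, hT₁⟩ := exists_isMaxIdxOn u Tᶜ (min_le_right r Tᶜ.card)
  obtain ⟨lam, hlam0, hlam, hlevel⟩ := exists_level_of_isMaxIdxOn u hr hT₁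
  obtain ⟨hT₁T, hT₁card, -⟩ := hT₁
  have hBc : (T ∪ T₁)ᶜ = Tᶜ \ T₁ := by
    ext i; simp only [Finset.mem_compl, Finset.mem_union, Finset.mem_sdiff]; tauto
  have hl1 := l1norm_restr_add_sdiff u hT₁T
  refine ⟨T ∪ T₁, Finset.subset_union_left, ?_, ?_, ?_⟩
  · calc (T ∪ T₁).card ≤ T.card + T₁.card := Finset.card_union_le _ _
      _ ≤ T.card + r := by rw [hT₁card]; exact Nat.add_le_add_left (min_le_left _ _) _
  · rw [hBc]
    refine (l1norm_mulVec_restr_le hA hr hC u _ hlam0 hlam).trans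
      (mul_le_mul_of_nonneg_left ?_ hC)
    rw [← hl1, add_div]
    linarith
  · have hlamB : Real.sqrt r * lam ≤ l2norm (restr u (T ∪ T₁)) :=
      calc Real.sqrt r * lam ≤ l1norm (restr u T₁) / Real.sqrt r := hlevel
        _ ≤ l2norm (restr u T₁) := by
          rw [div_le_iff₀' hsqrt]
          refine (l1norm_restr_le_sqrt_card_mul u T₁).trans ?_
          gcongr
          · exact l2norm_nonneg _
          · rw [hT₁card]; exact min_le_left _ _
        _ ≤ l2norm (restr u (T ∪ T₁)) := l2norm_restr_mono u Finset.subset_union_right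
    refine (l2norm_le_add_of_abs_le u _ hsqrt (hBc ▸ hlam) hlamB).trans ?_
    gcongr
    rw [hBc, ← hl1]
    linarith [l1norm_nonneg (restr u T₁)]

end Head

section Recovery

variable {n m : ℕ}

lemma l1norm_mulVec_sub_le (A : Matrix (Fin m) (Fin n) ℝ) (x xhat : Fin n → ℝ)
    (z b : Fin m → ℝ) (hb : b = A.mulVec x + z) :
    l1norm (A.mulVec (xhat - x)) ≤ l1norm z + l1norm (b - A.mulVec xhat) := by
  have e : A.mulVec (xhat - x) = z - (b - A.mulVec xhat) := by
    rw [Matrix.mulVec_sub, hb]; abel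
  rw [e]
  exact l1norm_sub_le _ _

lemma mul_l2norm_restr_le_add {A : Matrix (Fin m) (Fin n) ℝ} {r : ℕ} {d : ℝ}
    (hA : ∀ v : Fin n → ℝ, Sparse r v → d * l2norm v ≤ l1norm (A.mulVec v)) (u : Fin n → ℝ)
    {B : Finset (Fin n)} (hB : B.card ≤ r) :
    d * l2norm (restr u B) ≤ l1norm (A.mulVec u) + l1norm (A.mulVec (restr u Bᶜ)) := by
  have hsplit : restr u B = u - restr u Bᶜ := eq_sub_of_add_eq (restr_add_restr_compl u B)
  calc d * l2norm (restr u B) ≤ l1norm (A.mulVec (restr u B)) := hA _ (sparse_restr u hB)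
    _ ≤ l1norm (A.mulVec u) + l1norm (A.mulVec (restr u Bᶜ)) := by
      rw [hsplit, Matrix.mulVec_sub]
      exact l1norm_sub_le _ _

lemma l1norm_restr_compl_sub_le {α : ℝ} (hα : 0 ≤ α) (x xhat : Fin n → ℝ) (T : Finset (Fin n))
    (hmin : l1norm xhat - α * l2norm xhat ≤ l1norm x - α * l2norm x) :
    l1norm (restr (xhat - x) Tᶜ) ≤
      l1norm (restr (xhat - x) T) + 2 * l1norm (restr x Tᶜ) + α * l2norm (xhat - x) := by
  have hT : l1norm (restr x T) ≤ l1norm (restr xhat T) + l1norm (restr (xhat - x) T) := by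
    simpa [restr_sub] using l1norm_sub_le (restr xhat T) (restr (xhat - x) T)
  have hTc : l1norm (restr (xhat - x) Tᶜ) ≤ l1norm (restr xhat Tᶜ) + l1norm (restr x Tᶜ) := by
    simpa [restr_sub] using l1norm_sub_le (restr xhat Tᶜ) (restr x Tᶜ)
  have hl2 : l2norm xhat ≤ l2norm x + l2norm (xhat - x) := by
    simpa using l2norm_add_le x (xhat - x)
  have hx := l1norm_restr_add_compl x T
  have hxhat := l1norm_restr_add_compl xhat T
  linarith [mul_le_mul_of_nonneg_left hl2 hα]

/-- Read `H = ‖h‖₂`, `P = ‖h_B‖₂`, `N = ‖h_{Tᶜ}‖₁`, `ε = 2‖x_{Tᶜ}‖₁`, `κ = √k`, `σ = √s`,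
`C = 1 + δ^{ub}`, `d = 1 - δ^{lb}`: the hypotheses are the cone constraint, the `ℓ₂` tail bound and
the lower RIP bound. -/
lemma recovery_error_le {α σ κ C d ρ η ε N P H : ℝ} (hα : 0 ≤ α) (hσ : 0 < σ) (hκ : 0 < κ)
    (hακ : α * (κ + 1) ≤ κ * σ) (hC : 0 ≤ C) (hρ : ρ = d - C / (κ / 2)) (hρ0 : 0 < ρ)
    (hε : 0 ≤ ε) (hP : 0 ≤ P) (hcone : N ≤ σ * P + ε + α * H) (hH : H ≤ P + N / (2 * (κ * σ)))
    (hlow : d * P ≤ 2 * η + C * (N / (κ * σ))) :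
    H ≤ 2 * (2 * κ + 1) * σ / ((2 * (κ * σ) - α) * ρ) * η +
      σ / (2 * (κ * σ) - α) * ((2 * κ + 1) * C * σ / (ρ * (κ * σ - α)) + 1) * (ε / σ) := by
  have hκσα : 0 < κ * σ - α := by nlinarith [mul_pos hκ hσ]
  set c := N / (2 * (κ * σ)) with hc
  set q := ε / (κ * σ - α) with hq
  have hN : N = 2 * (κ * σ) * c := by rw [hc]; field_simp
  have hεq : ε = (κ * σ - α) * q := by rw [hq]; field_simp
  have h2κσα : 0 < 2 * (κ * σ) - α := by linarith
  have hq0 : 0 ≤ q := div_nonneg hε hκσα.le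
  have hαH := mul_le_mul_of_nonneg_left hH hα
  -- Eliminating `H` from the cone constraint; this is where `α * (κ + 1) ≤ κ * σ` is needed.
  have hcP : κ * c ≤ P + κ * q / 2 := by
    have hcq : (2 * (κ * σ) - α) * c ≤ (σ + α) * P + (κ * σ - α) * q := by
      linarith
    have : (2 * (κ * σ) - α) * (κ * c) ≤ (2 * (κ * σ) - α) * (P + κ * q / 2) := by
      linarith [mul_le_mul_of_nonneg_left hcq hκ.le,
        mul_nonneg hP (by linarith : 0 ≤ κ * σ - α - α * κ), mul_nonneg (mul_nonneg hκ.le hα) hq0]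
    exact le_of_mul_le_mul_left this h2κσα
  have hPle : P ≤ (2 * η + C * q) / ρ := by
    have hρκ : ρ * κ = κ * d - 2 * C := by rw [hρ]; field_simp
    have hNc : N / (κ * σ) = 2 * c := by rw [hN]; field_simp
    rw [hNc] at hlow
    rw [le_div_iff₀ hρ0]
    refine le_of_mul_le_mul_left ?_ hκ
    rw [show κ * (P * ρ) = P * (ρ * κ) by ring, hρκ]
    linarith [mul_le_mul_of_nonneg_left hcP hC, mul_le_mul_of_nonneg_left hlow hκ.le]
  have hHle : H ≤ ((2 * κ + 1) * σ * P + ε) / (2 * (κ * σ) - α) := by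
    rw [le_div_iff₀ h2κσα]
    linarith [mul_le_mul_of_nonneg_left hH (by positivity : 0 ≤ 2 * (κ * σ))]
  calc H ≤ ((2 * κ + 1) * σ * P + ε) / (2 * (κ * σ) - α) := hHle
    _ ≤ ((2 * κ + 1) * σ * ((2 * η + C * q) / ρ) + ε) / (2 * (κ * σ) - α) := by
        gcongr
    _ = _ := by rw [hq]; field_simp; ring

lemma two_mul_le_sqrt_mul_sub {α σ k : ℝ} (hα : 0 ≤ α) (hασ : α < σ)
    (hk : 4 * α ^ 2 / (σ - α) ^ 2 ≤ k) : 2 * α ≤ Real.sqrt k * (σ - α) := by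
  have hσα : 0 < σ - α := sub_pos.2 hασ
  rw [← div_le_iff₀ hσα, Real.le_sqrt (by positivity) ((by positivity : (0 : ℝ) ≤ _).trans hk)]
  rw [div_pow]
  convert hk using 2
  ring

end Recovery

theorem stmt8_general {n m : ℕ} (α : ℝ) (hα0 : 0 < α)
    (s : ℕ) (hαs : α < Real.sqrt s)
    (k : ℝ) (hk : 4 * α ^ 2 / (Real.sqrt s - α) ^ 2 ≤ k)
    (ks : ℕ) (hks : 0 < ks) (hksk : (ks : ℝ) = k * s)
    (A : Matrix (Fin m) (Fin n) ℝ) (δlb δub : ℝ) (hδlb : 0 ≤ δlb) (hδub : 0 ≤ δub)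
    (hRIPlb : ∀ v : Fin n → ℝ, Sparse (ks + s) v →
      (1 - δlb) * l2norm v ≤ l1norm (A.mulVec v))
    (hRIPub : ∀ v : Fin n → ℝ, Sparse ks v →
      l1norm (A.mulVec v) ≤ (1 + δub) * l2norm v)
    (hcond : δub + (Real.sqrt k / 2) * δlb < Real.sqrt k / 2 - 1)
    (x : Fin n → ℝ) (z : Fin m → ℝ) (η₁ : ℝ) (hz : l1norm z ≤ η₁)
    (b : Fin m → ℝ) (hb : b = A.mulVec x + z)
    (xhat : Fin n → ℝ) (hfeas : l1norm (b - A.mulVec xhat) ≤ η₁)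
    (hmin : l1norm xhat - α * l2norm xhat ≤ l1norm x - α * l2norm x)
    (Tx : Finset (Fin n)) (hTx : IsMaxIdx x s Tx)
    (ρ : ℝ) (hρ : ρ = 1 - δlb - (1 + δub) / (Real.sqrt k / 2)) :
    l2norm (xhat - x) ≤
      2 * (2 * Real.sqrt k + 1) * Real.sqrt s /
          ((2 * Real.sqrt (ks : ℝ) - α) * ρ) * η₁ +
      Real.sqrt s / (2 * Real.sqrt (ks : ℝ) - α) *
          ((2 * Real.sqrt k + 1) * (1 + δub) * Real.sqrt s /
              (ρ * (Real.sqrt (ks : ℝ) - α)) + 1) *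
          (2 * l1norm (restr x Txᶜ) / Real.sqrt s) := by
  obtain ⟨-, hTcard, -⟩ := hTx
  have hκ : 2 < Real.sqrt k := by linarith [mul_nonneg (Real.sqrt_nonneg k) hδlb]
  have hσ : 0 < Real.sqrt s := hα0.trans hαs
  have hsqrt_ks : Real.sqrt ks = Real.sqrt k * Real.sqrt s := by
    rw [hksk, Real.sqrt_mul (Real.sqrt_pos.1 (by linarith)).le]
  have hακ := two_mul_le_sqrt_mul_sub hα0.le hαs hk
  have hρ0 : 0 < ρ := by
    rw [hρ, sub_pos, div_lt_iff₀ (by linarith)]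
    linarith
  set h := xhat - x
  obtain ⟨B, hTB, hBcard, htail, hl2⟩ :=
    exists_superset_tail_bounds hRIPub hks (by linarith) h Tx
  have hlow : (1 - δlb) * l2norm (restr h B) ≤
      2 * η₁ + (1 + δub) * (l1norm (restr h Txᶜ) / Real.sqrt ks) :=
    (mul_l2norm_restr_le_add hRIPlb h (by omega)).trans
      (by linarith [l1norm_mulVec_sub_le A x xhat z b hb])
  have hhead : l1norm (restr h Tx) ≤ Real.sqrt s * l2norm (restr h B) :=
    calc l1norm (restr h Tx) ≤ Real.sqrt Tx.card * l2norm (restr h Tx) :=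
          l1norm_restr_le_sqrt_card_mul h Tx
      _ ≤ Real.sqrt s * l2norm (restr h B) := by
          rw [hTcard]; gcongr; exact l2norm_restr_mono h hTB
  have hcone := l1norm_restr_compl_sub_le hα0.le x xhat Tx hmin
  rw [hsqrt_ks] at hl2 hlow ⊢
  exact recovery_error_le hα0.le hσ (by linarith) (by linarith) (by linarith) hρ hρ0
    (by linarith [l1norm_nonneg (restr x Txᶜ)]) (l2norm_nonneg _) (by linarith) hl2 hlow

/-- stable recovery via `ℓ₁ − αℓ₂`-LAD, simpler RIP condition.
Let `0 < α ≤ 1`, `s` a positive integer with `√s > α`, and `k ≥ 4α²/(√s − α)²` such that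
`ks ∈ ℤ₊`.  Let `b = Ax + z` with `‖z‖₁ ≤ η₁`.  If the (ℓ₂,ℓ₁)-RIP constants of `A` satisfy
`δ_{ks}^{ub} + (√k/2)·δ_{(k+1)s}^{lb} < √k/2 − 1` and `x̂` satisfies `‖b − Ax̂‖₁ ≤ η₁` and
`‖x̂‖₁ − α‖x̂‖₂ ≤ ‖x‖₁ − α‖x‖₂`, then with
`ρ̃ = 1 − δ_{(k+1)s}^{lb} − (1 + δ_{ks}^{ub})/(√k/2)`:
`‖x̂ − x‖₂ ≤ [2(2√k + 1)√s/((2√(ks) − α)ρ̃)]·η₁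
  + [√s/(2√(ks) − α)]·[(2√k + 1)(1 + δ_{ks}^{ub})√s/(ρ̃(√(ks) − α)) + 1]·(2‖x₋ₘₐₓ₍ₛ₎‖₁/√s)`. -/
theorem stmt8 {n m : ℕ} (α : ℝ) (hα0 : 0 < α) (hα1 : α ≤ 1)
    (s : ℕ) (hs : 0 < s) (hαs : α < Real.sqrt s)
    (k : ℝ) (hk : 4 * α ^ 2 / (Real.sqrt s - α) ^ 2 ≤ k)
    (ks : ℕ) (hks : 0 < ks) (hksk : (ks : ℝ) = k * s)
    (A : Matrix (Fin m) (Fin n) ℝ) (δlb δub : ℝ) (hδlb : 0 ≤ δlb) (hδub : 0 ≤ δub)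
    (hRIPlb : ∀ v : Fin n → ℝ, Sparse (ks + s) v →
      (1 - δlb) * l2norm v ≤ l1norm (A.mulVec v))
    (hRIPub : ∀ v : Fin n → ℝ, Sparse ks v →
      l1norm (A.mulVec v) ≤ (1 + δub) * l2norm v)
    (hcond : δub + (Real.sqrt k / 2) * δlb < Real.sqrt k / 2 - 1)
    (x : Fin n → ℝ) (z : Fin m → ℝ) (η₁ : ℝ) (hz : l1norm z ≤ η₁)
    (b : Fin m → ℝ) (hb : b = A.mulVec x + z)
    (xhat : Fin n → ℝ) (hfeas : l1norm (b - A.mulVec xhat) ≤ η₁)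
    (hmin : l1norm xhat - α * l2norm xhat ≤ l1norm x - α * l2norm x)
    (Tx : Finset (Fin n)) (hTx : IsMaxIdx x s Tx)
    (ρ : ℝ) (hρ : ρ = 1 - δlb - (1 + δub) / (Real.sqrt k / 2)) :
    l2norm (xhat - x) ≤
      2 * (2 * Real.sqrt k + 1) * Real.sqrt s /
          ((2 * Real.sqrt (ks : ℝ) - α) * ρ) * η₁ +
      Real.sqrt s / (2 * Real.sqrt (ks : ℝ) - α) *
          ((2 * Real.sqrt k + 1) * (1 + δub) * Real.sqrt s /
              (ρ * (Real.sqrt (ks : ℝ) - α)) + 1) *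
          (2 * l1norm (restr x Txᶜ) / Real.sqrt s) :=
  stmt8_general α hα0 s hαs k hk ks hks hksk A δlb δub hδlb hδub hRIPlb hRIPub hcond x z η₁ hz b hb
    xhat hfeas hmin Tx hTx ρ hρ
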